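/- Computational basis states have nonnegative (delta-function) Wigner representation: for all a = (a₁, a₂) ∈ ZMod d × ZMod d and all x ∈ ZMod d, the diagonal entry of the phase point operator satisfies (A_(a₁,a₂)) x x = 1 if x = a₂ and = 0 otherwise; consequently the discrete Wigner function of each computational basis projector |x⟩⟨x| is nonnegative at every phase space point. -/

import Mathlib

open Matrix Complex

/-- ω = exp(2πi/d). -/
noncomputable def omegaC (d : ℕ) : ℂ := Complex.exp (2 * Real.pi * Complex.I / d)

/-- The clock matrix `Z`, with `Z x x = ω ^ x.val`. -/
noncomputable def Zmat (d : ℕ) : Matrix (ZMod d) (ZMod d) ℂ :=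
  Matrix.diagonal (fun x => omegaC d ^ x.val)

/-- The shift matrix `X`, with `X x y = 1` iff `x = y + 1`. -/
noncomputable def Xmat (d : ℕ) : Matrix (ZMod d) (ZMod d) ℂ :=
  Matrix.of fun x y => if x = y + 1 then 1 else 0

/-- The Heisenberg–Weyl operator `T_a`. -/
noncomputable def TW (d : ℕ) [NeZero d] (a : ZMod d × ZMod d) : Matrix (ZMod d) (ZMod d) ℂ :=
  omegaC d ^ ((-((2 : ZMod d)⁻¹ * a.1 * a.2)).val) • (Zmat d ^ a.1.val * Xmat d ^ a.2.val)

/-- The phase point operator at the origin, `A_0 = (1/d) • ∑ a, T_a`. -/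
noncomputable def Apoint0 (d : ℕ) [NeZero d] : Matrix (ZMod d) (ZMod d) ℂ :=
  (1 / (d : ℂ)) • ∑ a : ZMod d × ZMod d, TW d a

/-- The phase point operator `A_u = T_u * A_0 * T_uᴴ`. -/
noncomputable def Apoint (d : ℕ) [NeZero d] (u : ZMod d × ZMod d) : Matrix (ZMod d) (ZMod d) ℂ :=
  TW d u * Apoint0 d * (TW d u)ᴴ

/-! `ω ^ a.val` is the standard additive character `ψ` of `ZMod d`, so
`T_a x y = ψ (a₁ x - 2⁻¹ a₁ a₂)` when `x = y + a₂` and `0` otherwise. Summing over `a₁` by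
orthogonality of characters turns `A_0` into the parity matrix `|y⟩ ↦ |-y⟩`. Hence
`(A_u) x x = T_u x y * conj (T_u x (-y))` with `y = x - u₂` forced by the first factor and
`-y = x - u₂` by the second; as `2` is invertible for odd `d`, both hold exactly when `x = u₂`,
where the product is `|ψ|² = 1`. -/

lemma ZMod.isUnit_two_of_odd {d : ℕ} (hodd : Odd d) : IsUnit (2 : ZMod d) := by
  simpa using (ZMod.isUnit_iff_coprime 2 d).mpr (Nat.coprime_two_left.mpr hodd)

lemma Matrix.mul_parity_mul_conjTranspose_apply_self {n α : Type*} [Fintype n] [AddGroup n]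
    [DecidableEq n] [NonAssocSemiring α] [Star α] (M : Matrix n n α) (x : n) :
    (M * (of fun y z => if z = -y then 1 else 0 : Matrix n n α) * Mᴴ) x x =
      ∑ y, M x y * star (M x (-y)) := by
  simp only [mul_apply, of_apply, conjTranspose_apply, mul_ite, mul_one, mul_zero, Finset.sum_mul]
  rw [Finset.sum_comm]
  simp

lemma ZMod.stdAddChar_mul_star {d : ℕ} [NeZero d] (a : ZMod d) :
    stdAddChar a * star (stdAddChar a) = 1 := by
  rw [Complex.star_def, Complex.mul_conj, stdAddChar_apply, Circle.normSq_coe, ofReal_one]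

section HeisenbergWeyl

open ZMod

variable {d : ℕ} [NeZero d]

lemma omegaC_pow_val (a : ZMod d) : omegaC d ^ a.val = stdAddChar a := by
  rw [stdAddChar_apply, toCircle_apply, omegaC, ← Complex.exp_nat_mul]
  congr 1
  ring

lemma Xmat_pow_apply (n : ℕ) (x y : ZMod d) :
    (Xmat d ^ n) x y = if x = y + n then 1 else 0 := by
  induction n generalizing y with
  | zero => simp [one_apply]
  | succ n ih =>
    rw [pow_succ, mul_apply, Finset.sum_eq_single (y + 1)]
    · rw [ih, Xmat, of_apply, if_pos rfl, mul_one, Nat.cast_succ, add_assoc, add_comm 1]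
    · intro z _ hz
      simp [Xmat, hz]
    · simp

lemma TW_apply (a : ZMod d × ZMod d) (x y : ZMod d) :
    TW d a x y = if x = y + a.2 then stdAddChar (a.1 * x - 2⁻¹ * a.1 * a.2) else 0 := by
  rw [TW, Matrix.smul_apply, Zmat, diagonal_pow, diagonal_mul, Xmat_pow_apply, natCast_zmod_val,
    Pi.pow_apply, omegaC_pow_val, omegaC_pow_val, ← AddChar.map_nsmul_eq_pow, nsmul_eq_mul,
    natCast_zmod_val]
  split_ifs
  · rw [smul_eq_mul, mul_one, ← AddChar.map_add_eq_mul]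
    ring_nf
  · rw [mul_zero, smul_zero]

lemma Apoint0_eq (hodd : Odd d) : Apoint0 d = of fun x y => if y = -x then 1 else 0 := by
  ext x y
  have h2 : (2 : ZMod d) * 2⁻¹ = 1 := mul_inv_of_unit 2 (isUnit_two_of_odd hodd)
  have hsym : (2 : ZMod d)⁻¹ * (x + y) = 0 ↔ y = -x := by
    rw [(IsUnit.of_mul_eq_one_right _ h2).mul_right_eq_zero, eq_neg_iff_add_eq_zero, add_comm]
  have hshift (a₂ : ZMod d) : x = y + a₂ ↔ a₂ = x - y := by
    rw [eq_sub_iff_add_eq', eq_comm]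
  have hphase (a₁ : ZMod d) : a₁ * x - 2⁻¹ * a₁ * (x - y) = a₁ * (2⁻¹ * (x + y)) := by
    linear_combination -(a₁ * x) * h2
  simp only [Apoint0, Matrix.smul_apply, Matrix.sum_apply, Fintype.sum_prod_type, TW_apply, hshift,
    Finset.sum_ite_eq', Finset.mem_univ, if_true, hphase,
    AddChar.sum_mulShift _ (isPrimitive_stdAddChar d), card, of_apply]
  simp only [hsym]
  split_ifs <;> simp [NeZero.ne d]

lemma Apoint_apply_self (hodd : Odd d) (u : ZMod d × ZMod d) (x : ZMod d) :
    Apoint d u x x = if x = u.2 then 1 else 0 := by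
  have hfix : x = -(x - u.2) + u.2 ↔ x = u.2 := by
    have h : x - (-(x - u.2) + u.2) = 2 * (x - u.2) := by ring
    rw [← sub_eq_zero, h, (isUnit_two_of_odd hodd).mul_right_eq_zero, sub_eq_zero]
  rw [Apoint, Apoint0_eq hodd, mul_parity_mul_conjTranspose_apply_self,
    Finset.sum_eq_single (x - u.2)]
  · rw [TW_apply, TW_apply, if_pos (by ring)]
    simp only [hfix]
    split_ifs
    · exact stdAddChar_mul_star _
    · rw [star_zero, mul_zero]
  · intro y _ hy
    rw [TW_apply, if_neg (fun h => hy (by rw [h]; ring)), zero_mul]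
  · simp

end HeisenbergWeyl

theorem basis_states_nonneg_wigner_general (d : ℕ) [NeZero d] (hodd : Odd d) :
    (∀ a : ZMod d × ZMod d, ∀ x : ZMod d,
        Apoint d a x x = if x = a.2 then 1 else 0) ∧
    (∀ x : ZMod d, ∀ u : ZMod d × ZMod d,
        0 ≤ (1 / (d : ℝ)) *
          ((Apoint d u * Matrix.single x x (1 : ℂ)).trace).re) := by
  refine ⟨fun a x => Apoint_apply_self hodd a x, fun x u => ?_⟩
  rw [trace_mul_single, MulOpposite.op_one, one_smul, Apoint_apply_self hodd]
  split_ifs <;> simp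

/-- Computational basis states have nonnegative (delta-function) Wigner representation. -/
theorem basis_states_nonneg_wigner (d : ℕ) [NeZero d] (hodd : Odd d) (hd : 1 < d) :
    (∀ a : ZMod d × ZMod d, ∀ x : ZMod d,
        Apoint d a x x = if x = a.2 then 1 else 0) ∧
    (∀ x : ZMod d, ∀ u : ZMod d × ZMod d,
        0 ≤ (1 / (d : ℝ)) *
          ((Apoint d u * Matrix.single x x (1 : ℂ)).trace).re) :=
  basis_states_nonneg_wigner_general d hodd
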